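/- arXiv:1801.10432 — 5 statements merged into one kernel-verified Lean document; each statement's English description precedes it below -/
import Mathlib

section
/- Let N = 2^n̄ and let {e_j} be the standard (Dirac) basis of ℂ^N and {ψ̃_j} the 1D discrete Haar wavelet basis of ℂ^N. Then for every j, the local coherence max_{j'} |⟨e_j, ψ̃_{j'}⟩| equals 2^{-1/2}. -/
noncomputable section

/-- The 1D Haar scaling function `ψ(t) = 2^{-n̄/2}` on `{0,…,2^n̄-1}`. -/
def haarScaling (nb : ℕ) : ℕ → ℝ := fun _ => (2 : ℝ) ^ (-(nb : ℝ) / 2)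

/-- The 1D discrete Haar wavelet `h_{n,l}` at resolution `n` and position `l`,
on the grid `{0,…,2^n̄-1}`. -/
def haarWavelet (nb n l : ℕ) : ℕ → ℝ := fun t =>
  if l * 2 ^ (nb - n) ≤ t ∧ 2 * t < (2 * l + 1) * 2 ^ (nb - n) then
    (2 : ℝ) ^ (((n : ℝ) - nb) / 2)
  else if (2 * l + 1) * 2 ^ (nb - n) ≤ 2 * t ∧ t < (l + 1) * 2 ^ (nb - n) then
    -((2 : ℝ) ^ (((n : ℝ) - nb) / 2))
  else 0

/-- Index set of the 1D Haar wavelet basis of `ℂ^{2^n̄}`: the scaling function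
together with the wavelets `h_{n,l}`, `0 ≤ n ≤ n̄-1`, `0 ≤ l ≤ 2^n - 1`. -/
abbrev HaarIndex (nb : ℕ) := Unit ⊕ (Σ n : Fin nb, Fin (2 ^ (n : ℕ)))

/-- The 1D Haar wavelet basis functions, indexed by `HaarIndex`. -/
def haarFn (nb : ℕ) : HaarIndex nb → ℕ → ℝ
  | Sum.inl _ => haarScaling nb
  | Sum.inr ⟨n, l⟩ => haarWavelet nb n l

end

open Finset

lemma rpow_le_half (x : ℝ) (hx : x ≤ -1/2) : (2:ℝ) ^ x ≤ (2:ℝ) ^ (-(1:ℝ)/2) := by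
  apply Real.rpow_le_rpow_left_iff (x := (2:ℝ)) (by norm_num) |>.mpr
  linarith

/-- the local coherence of the Dirac basis with the 1D Haar
wavelet basis equals `2^{-1/2}`. -/
theorem dirac_haar_local_coherence (nb : ℕ) (hnb : 1 ≤ nb) (j : Fin (2 ^ nb)) :
    Finset.univ.sup' ⟨Sum.inl (), Finset.mem_univ _⟩
        (fun i : HaarIndex nb => |haarFn nb i (j : ℕ)|) =
      (2 : ℝ) ^ (-(1 : ℝ) / 2) := by
  have hpos : (0:ℝ) < (2:ℝ) ^ (-(1:ℝ)/2) := Real.rpow_pos_of_pos (by norm_num) _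
  apply le_antisymm
  · apply Finset.sup'_le
    intro i _
    rcases i with _ | ⟨n, l⟩
    · simp only [haarFn, haarScaling]
      rw [abs_of_pos (Real.rpow_pos_of_pos (by norm_num) _)]
      apply rpow_le_half
      have : (1:ℝ) ≤ (nb:ℝ) := by exact_mod_cast hnb
      linarith
    · simp only [haarFn, haarWavelet]
      have hle : ((n:ℕ):ℝ) - nb ≤ -1 := by
        have : (n:ℕ) < nb := n.2
        have : ((n:ℕ):ℝ) + 1 ≤ (nb:ℝ) := by exact_mod_cast this
        linarith
      have h1 : |(2:ℝ) ^ ((((n:ℕ):ℝ) - nb) / 2)| ≤ (2:ℝ) ^ (-(1:ℝ)/2) := by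
        rw [abs_of_pos (Real.rpow_pos_of_pos (by norm_num) _)]
        apply rpow_le_half; linarith
      split_ifs
      · exact h1
      · rwa [abs_neg]
      · simpa using hpos.le
  · have hjlt : (j:ℕ) / 2 < 2 ^ (nb - 1) := by
      have := j.2
      have h2 : 2 ^ nb = 2 * 2 ^ (nb - 1) := by
        rw [← pow_succ']
        congr 1
        omega
      omega
    have hn : nb - 1 < nb := by omega
    refine le_trans ?_ (Finset.le_sup' _ (Finset.mem_univ
      (Sum.inr ⟨⟨nb - 1, hn⟩, ⟨(j:ℕ) / 2, hjlt⟩⟩)))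
    have hcast : (((nb - 1 : ℕ) : ℝ) - nb) / 2 = -(1:ℝ)/2 := by
      have : ((nb - 1 : ℕ) : ℝ) = (nb : ℝ) - 1 := by
        push_cast [Nat.cast_sub hnb]; ring
      rw [this]; ring
    simp only [haarFn, haarWavelet]
    have hexp : nb - (nb - 1) = 1 := by omega
    rw [hexp, hcast]
    rcases Nat.even_or_odd (j:ℕ) with he | ho
    · have h1 : (j:ℕ) / 2 * 2 ^ 1 ≤ (j:ℕ) ∧ 2 * (j:ℕ) < (2 * ((j:ℕ)/2) + 1) * 2 ^ 1 := by
        obtain ⟨k, hk⟩ := he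
        constructor <;> simp [pow_one] <;> omega
      rw [if_pos h1, abs_of_pos hpos]
    · have h1 : ¬ ((j:ℕ) / 2 * 2 ^ 1 ≤ (j:ℕ) ∧ 2 * (j:ℕ) < (2 * ((j:ℕ)/2) + 1) * 2 ^ 1) := by
        obtain ⟨k, hk⟩ := ho
        simp [pow_one]; omega
      have h2 : (2 * ((j:ℕ)/2) + 1) * 2 ^ 1 ≤ 2 * (j:ℕ) ∧ (j:ℕ) < ((j:ℕ)/2 + 1) * 2 ^ 1 := by
        obtain ⟨k, hk⟩ := ho
        constructor <;> simp [pow_one] <;> omega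
      rw [if_neg h1, if_pos h2, abs_neg, abs_of_pos hpos]
end

section
/- Let N = 2^n̄ with n̄ ≥ 1, let φ_k(t) = N^{-1/2} e^{2πi kt/N} be the discrete Fourier basis element for an integer frequency k with -N/2+1 ≤ k ≤ N/2, k ≠ 0, and let h_{n,l} be a 1D discrete Haar wavelet of resolution n and position l. Then |⟨φ_k, h_{n,l}⟩| ≤ √2 / √|k|. -/
noncomputable section

/-- The 1D discrete Fourier basis element `φ_k(t) = N^{-1/2} e^{2πi k t / N}`
with `N = 2^n̄`. -/
def fourierFn (nb : ℕ) (k : ℤ) (t : ℕ) : ℂ :=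
  (Real.sqrt (2 ^ nb) : ℂ)⁻¹ *
    Complex.exp (2 * Real.pi * Complex.I * k * t / (2 ^ nb))

end

/-! Conjugated Fourier modes are the powers of `z = exp (I * θ)`, `θ = -2πk/2^n̄`, and `h_{n,l}` is
`±(2H)^{-1/2}` on two adjacent blocks of length `H = 2^{n̄-n-1}`. The inner product is therefore a
difference of two geometric sums, equal to `-z^a (z^H - 1)² / (z - 1)`, whose modulus is
`2 sin²(Hθ/2) / |sin(θ/2)|`. Jordan's inequality bounds `|sin(θ/2)|` below by `|k| / (2^n H)`, and
`sin⁴(Hθ/2) ≤ |sin(Hθ/2)| ≤ π|k| / 2^{n+1}`; together these give the square of the bound, `2/|k|`,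
using only `π ≤ 4`. -/

open Finset Complex Real ComplexConjugate

lemma two_mul_abs_le_of_le_ediv_two {N k : ℤ} (hlb : -N / 2 + 1 ≤ k) (hub : k ≤ N / 2) :
    2 * |k| ≤ N := by
  rcases abs_cases k with ⟨h, -⟩ | ⟨h, -⟩ <;> omega

lemma conj_fourierFn (nb : ℕ) (k : ℤ) (t : ℕ) :
    conj (fourierFn nb k t) =
      ((√(2 ^ nb))⁻¹ : ℝ) * exp (I * ((-(2 * π * k / 2 ^ nb) : ℝ) : ℂ)) ^ t := by
  rw [fourierFn, map_mul, ← Complex.exp_nat_mul, ← exp_conj, map_inv₀, conj_ofReal, ofReal_inv]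
  congr 2
  simp only [map_div₀, map_mul, conj_I, conj_ofReal, map_intCast, map_natCast, map_pow,
    map_ofNat]
  push_cast
  ring

lemma two_rpow_sub_div_two {nb n : ℕ} (hn : n ≤ nb) :
    (2 : ℝ) ^ (((n : ℝ) - nb) / 2) = (√(2 ^ (nb - n)))⁻¹ := by
  rw [Real.sqrt_eq_rpow, ← Real.rpow_natCast, ← Real.rpow_mul zero_le_two,
    ← Real.rpow_neg zero_le_two, Nat.cast_sub hn]
  ring_nf

lemma haarWavelet_eq_ite {nb n H : ℕ} (hn : n ≤ nb) (hH : 2 ^ (nb - n) = 2 * H) (l t : ℕ) :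
    haarWavelet nb n l t =
      if t ∈ Ico (2 * l * H) (2 * l * H + H) then (√(2 * H))⁻¹
      else if t ∈ Ico (2 * l * H + H) (2 * l * H + 2 * H) then -(√(2 * H))⁻¹ else 0 := by
  have h2H : (√(2 * H))⁻¹ = (2 : ℝ) ^ (((n : ℝ) - nb) / 2) := by
    rw [two_rpow_sub_div_two hn, show (2 : ℝ) ^ (nb - n) = 2 * H by exact_mod_cast hH]
  rw [haarWavelet, hH, h2H, show l * (2 * H) = 2 * l * H by ring,
    show (2 * l + 1) * (2 * H) = 2 * (2 * l * H + H) by ring,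
    show (l + 1) * (2 * H) = 2 * l * H + 2 * H by ring]
  generalize 2 * l * H = a
  have h₁ : a ≤ t ∧ 2 * t < 2 * (a + H) ↔ t ∈ Ico a (a + H) := by rw [mem_Ico]; omega
  have h₂ : 2 * (a + H) ≤ 2 * t ∧ t < a + 2 * H ↔ t ∈ Ico (a + H) (a + 2 * H) := by
    rw [mem_Ico]; omega
  simp only [h₁, h₂]

lemma sum_range_mul_haarWavelet {nb n l H : ℕ} (hn : n ≤ nb) (hH : 2 ^ (nb - n) = 2 * H)
    (hl : l < 2 ^ n) (f : ℕ → ℂ) :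
    ∑ t ∈ range (2 ^ nb), f t * haarWavelet nb n l t =
      ((√(2 * H))⁻¹ : ℝ) * (∑ t ∈ Ico (2 * l * H) (2 * l * H + H), f t -
        ∑ t ∈ Ico (2 * l * H + H) (2 * l * H + 2 * H), f t) := by
  have hsupp : 2 * l * H + 2 * H ≤ 2 ^ nb :=
    calc 2 * l * H + 2 * H = (l + 1) * 2 ^ (nb - n) := by rw [hH]; ring
      _ ≤ 2 ^ n * 2 ^ (nb - n) := Nat.mul_le_mul_right _ hl
      _ = 2 ^ nb := by rw [← pow_add, Nat.add_sub_cancel' hn]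
  have hterm : ∀ t, f t * haarWavelet nb n l t = ((√(2 * H))⁻¹ : ℝ) *
      ((if t ∈ Ico (2 * l * H) (2 * l * H + H) then f t else 0) -
        if t ∈ Ico (2 * l * H + H) (2 * l * H + 2 * H) then f t else 0) := by
    intro t
    rw [haarWavelet_eq_ite hn hH]
    simp only [mem_Ico]
    split_ifs <;> first | omega | push_cast; ring
  simp only [hterm, ← mul_sum, sum_sub_distrib, sum_ite_mem]
  rw [inter_eq_right.mpr, inter_eq_right.mpr] <;>
    exact fun t ht => mem_range.mpr ((mem_Ico.mp ht).2.trans_le (by omega))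

lemma geom_sum_Ico_sub_geom_sum_Ico_mul_sub_one {R : Type*} [CommRing R] (z : R) (a H : ℕ) :
    (∑ t ∈ Ico a (a + H), z ^ t - ∑ t ∈ Ico (a + H) (a + 2 * H), z ^ t) * (z - 1) =
      -(z ^ a * (z ^ H - 1) ^ 2) := by
  rw [sub_mul, geom_sum_Ico_mul _ (by omega), geom_sum_Ico_mul _ (by omega), two_mul,
    ← add_assoc, pow_add, pow_add]
  ring

lemma norm_geom_sum_Ico_sub_geom_sum_Ico_exp_mul_abs_sin (θ : ℝ) (a H : ℕ) :
    ‖∑ t ∈ Ico a (a + H), exp (I * θ) ^ t - ∑ t ∈ Ico (a + H) (a + 2 * H), exp (I * θ) ^ t‖ *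
      |Real.sin (θ / 2)| = 2 * Real.sin (H * (θ / 2)) ^ 2 := by
  have h := congrArg norm (geom_sum_Ico_sub_geom_sum_Ico_mul_sub_one (exp (I * θ)) a H)
  have hpow : exp (I * θ) ^ H = exp (I * ↑(H * θ)) := by
    rw [← Complex.exp_nat_mul]; push_cast; ring_nf
  rw [hpow] at h
  simp only [norm_mul, norm_neg, norm_pow, norm_exp_I_mul_ofReal, norm_exp_I_mul_ofReal_sub_one,
    one_pow, one_mul, Real.norm_eq_abs, abs_two, mul_pow, sq_abs, mul_div_assoc] at h
  linarith

lemma le_sqrt_two_div_sqrt_of_mul_abs_sin_eq {m H κ S x : ℝ} (hm : 0 < m) (hH : 0 < H)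
    (hκ : 0 < κ) (hκmH : κ ≤ m * H) (hx : |x| = π * κ / (2 * m * H)) (hS0 : 0 ≤ S)
    (hS : S * |Real.sin x| = 2 * Real.sin (H * x) ^ 2) :
    (√(2 * m * H))⁻¹ * (√(2 * H))⁻¹ * S ≤ √2 / √κ := by
  have hx_le : |x| ≤ π / 2 := by
    rw [hx, div_le_div_iff₀ (by positivity) two_pos]
    nlinarith [pi_pos]
  have hsin : κ / (m * H) ≤ |Real.sin x| :=
    calc κ / (m * H) = 2 / π * |x| := by rw [hx]; field_simp
      _ ≤ |Real.sin x| := mul_abs_le_abs_sin hx_le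
  have hsinH : |Real.sin (H * x)| ≤ π * κ / (2 * m) :=
    calc |Real.sin (H * x)| ≤ |H * x| := abs_sin_le_abs
      _ = π * κ / (2 * m) := by rw [abs_mul, abs_of_pos hH, hx]; field_simp
  have hsinH4 : Real.sin (H * x) ^ 4 * m ≤ 2 * κ :=
    calc Real.sin (H * x) ^ 4 * m = |Real.sin (H * x)| ^ 4 * m := by
          rw [← abs_pow, abs_of_nonneg (by positivity)]
      _ ≤ |Real.sin (H * x)| * m := by
        gcongr; exact pow_le_of_le_one (abs_nonneg _) (abs_sin_le_one _) (by norm_num)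
      _ ≤ π * κ / (2 * m) * m := by gcongr
      _ = π / 2 * κ := by field_simp
      _ ≤ 2 * κ := by nlinarith [pi_le_four]
  have hSκ : S * κ ≤ 2 * Real.sin (H * x) ^ 2 * (m * H) := by
    rw [← hS, mul_assoc]
    gcongr
    rwa [← div_le_iff₀ (by positivity)]
  have hlhs : (√(2 * m * H))⁻¹ * (√(2 * H))⁻¹ * S = √(S ^ 2 / (2 * m * H * (2 * H))) := by
    rw [Real.sqrt_div (sq_nonneg S), Real.sqrt_sq hS0,
      Real.sqrt_mul (x := 2 * m * H) (by positivity) (2 * H)]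
    ring
  rw [hlhs, ← Real.sqrt_div zero_le_two]
  refine Real.sqrt_le_sqrt ?_
  rw [div_le_div_iff₀ (by positivity) hκ]
  nlinarith [mul_le_mul hSκ hSκ (by positivity) (by positivity),
    mul_le_mul_of_nonneg_right hsinH4 (by positivity : (0 : ℝ) ≤ 4 * m * H ^ 2)]

/-- Fourier–Haar inner product bound `|⟨φ_k, h_{n,l}⟩| ≤ √2/√|k|`. -/
theorem fourier_haar_inner_bound (nb : ℕ) (hnb : 1 ≤ nb) (k : ℤ) (hk : k ≠ 0)
    (hklb : -((2 : ℤ) ^ nb) / 2 + 1 ≤ k) (hkub : k ≤ (2 : ℤ) ^ nb / 2)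
    (n l : ℕ) (hn : n ≤ nb - 1) (hl : l ≤ 2 ^ n - 1) :
    ‖(∑ t ∈ Finset.range (2 ^ nb),
        (starRingEnd ℂ) (fourierFn nb k t) * (haarWavelet nb n l t : ℂ))‖ ≤
      Real.sqrt 2 / Real.sqrt |(k : ℝ)| := by
  set H := 2 ^ (nb - n - 1)
  have hH : 2 ^ (nb - n) = 2 * H := by rw [← pow_succ']; congr 1; omega
  have hN : (2 : ℝ) ^ nb = 2 * 2 ^ n * H := by
    norm_cast
    rw [mul_right_comm, ← hH, ← pow_add, Nat.sub_add_cancel (by omega)]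
  have hk2 : 2 * |(k : ℝ)| ≤ 2 ^ nb := by
    exact_mod_cast two_mul_abs_le_of_le_ediv_two hklb hkub
  simp only [conj_fourierFn]
  generalize hθ_def : -(2 * π * k / 2 ^ nb) = θ
  have hθ : |θ / 2| = π * |(k : ℝ)| / (2 * 2 ^ n * H) := by
    rw [← hN, ← hθ_def, neg_div, abs_neg, abs_div, abs_div, abs_mul, abs_mul, abs_two,
      abs_of_pos pi_pos, abs_of_pos (by positivity : (0 : ℝ) < 2 ^ nb)]
    ring
  simp only [mul_assoc, ← mul_sum]
  rw [sum_range_mul_haarWavelet (by omega) hH (by have := Nat.two_pow_pos n; omega), norm_mul,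
    norm_mul, norm_real, norm_real, Real.norm_of_nonneg (by positivity),
    Real.norm_of_nonneg (by positivity), hN, ← mul_assoc]
  exact le_sqrt_two_div_sqrt_of_mul_abs_sin_eq (by positivity) (by positivity)
    (abs_pos.mpr (Int.cast_ne_zero.mpr hk)) (by linarith) hθ (norm_nonneg _)
    (norm_geom_sum_Ico_sub_geom_sum_Ico_exp_mul_abs_sin θ (2 * l * H) H)
end

section
/- Let N = 2^n̄, F the N×N discrete Fourier basis and Ψ_{1D} the N×N 1D Haar wavelet basis. Then the local coherence μ_l^{loc}(F*Ψ_{1D}) := max_j |(F*Ψ_{1D})_{l,j}| satisfies μ_l^{loc} ≤ √2 · min{1, |l - N/2|^{-1/2}} for all l ∈ {1,...,N} (with the frequency indexed so that l = N/2 corresponds to zero frequency). -/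
open Finset
open Real

theorem norm_geom_sum_le_of_norm_eq_one {R : Type*} [NormedDivisionRing R] {z : R}
    (hz : ‖z‖ = 1) (m : ℕ) : ‖∑ s ∈ range m, z ^ s‖ ≤ m :=
  (norm_sum_le _ _).trans (by simp [hz])

theorem norm_pow_sub_one_le_two_of_norm_eq_one {R : Type*} [NormedDivisionRing R] {z : R}
    (hz : ‖z‖ = 1) (m : ℕ) : ‖z ^ m - 1‖ ≤ 2 :=
  (norm_sub_le _ _).trans (by rw [norm_pow, hz, one_pow, norm_one]; norm_num)

theorem two_div_pi_mul_abs_le_norm_exp_I_mul_ofReal_sub_one {θ : ℝ} (hθ : |θ| ≤ π) :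
    2 / π * |θ| ≤ ‖Complex.exp (Complex.I * θ) - 1‖ := by
  have hθ2 : |θ / 2| ≤ π / 2 := by rw [abs_div, abs_two]; linarith
  have := mul_abs_le_abs_sin hθ2
  rw [Complex.norm_exp_I_mul_ofReal_sub_one, norm_mul, Real.norm_eq_abs, Real.norm_eq_abs,
    abs_two]
  rw [abs_div, abs_two] at this
  linarith

theorem two_rpow_div_two (j : ℕ) : (2 : ℝ) ^ ((j : ℝ) / 2) = √(2 ^ j) := by
  rw [Real.sqrt_eq_rpow, ← Real.rpow_natCast, ← Real.rpow_mul zero_le_two]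
  ring_nf

theorem two_pow_eq_two_pow_mul_two_mul {n nb : ℕ} (hn : n < nb) :
    (2 : ℝ) ^ nb = 2 ^ n * (2 * 2 ^ (nb - n - 1)) := by
  rw [← pow_succ', ← pow_add]; congr 1; omega

noncomputable def fourierRoot (N : ℕ) (k : ℤ) : ℂ :=
  Complex.exp (Complex.I * ↑(-(2 * π * k / N)))

theorem norm_fourierRoot (N : ℕ) (k : ℤ) : ‖fourierRoot N k‖ = 1 :=
  Complex.norm_exp_I_mul_ofReal _

theorem fourierRoot_pow_self {N : ℕ} (hN : N ≠ 0) (k : ℤ) : fourierRoot N k ^ N = 1 := by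
  rw [fourierRoot, ← Complex.exp_nat_mul, ← Complex.exp_int_mul_two_pi_mul_I (-k)]
  congr 1
  push_cast
  field_simp

theorem abs_two_pi_mul_div (k : ℤ) (N : ℕ) : |2 * π * k / N| = 2 * π * |(k : ℝ)| / N := by
  rw [abs_div, abs_mul, abs_mul, abs_two, abs_of_pos pi_pos, Nat.abs_cast]

theorem norm_fourierRoot_pow_sub_one_le (N : ℕ) (k : ℤ) (m : ℕ) :
    ‖fourierRoot N k ^ m - 1‖ ≤ m * (2 * π * |(k : ℝ)| / N) := by
  have h := norm_exp_I_mul_ofReal_sub_one_le (x := m * -(2 * π * k / N))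
  rw [fourierRoot, ← Complex.exp_nat_mul]
  rw [Real.norm_eq_abs, abs_mul, abs_neg, Nat.abs_cast, abs_two_pi_mul_div] at h
  convert h using 4
  push_cast
  ring

theorem le_norm_fourierRoot_sub_one {N : ℕ} {k : ℤ} (hk : 2 * |k| ≤ N) :
    4 * |(k : ℝ)| / N ≤ ‖fourierRoot N k - 1‖ := by
  have hkR : 2 * |(k : ℝ)| ≤ N := by exact_mod_cast hk
  rcases (Nat.cast_nonneg N : (0:ℝ) ≤ N).eq_or_lt with hN | hN
  · rw [← hN, div_zero]; exact norm_nonneg _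
  have hθ : |-(2 * π * k / N)| ≤ π := by
    rw [abs_neg, abs_two_pi_mul_div, div_le_iff₀ hN]; nlinarith [pi_pos]
  have := two_div_pi_mul_abs_le_norm_exp_I_mul_ofReal_sub_one hθ
  rw [abs_neg, abs_two_pi_mul_div] at this
  calc 4 * |(k : ℝ)| / N = 2 / π * (2 * π * |(k : ℝ)| / N) := by field_simp; ring
    _ ≤ ‖fourierRoot N k - 1‖ := this

theorem fourierRoot_sub_one_ne_zero {N : ℕ} {k : ℤ} (hk0 : k ≠ 0) (hk : 2 * |k| ≤ N) :
    fourierRoot N k - 1 ≠ 0 := by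
  have hN : (0 : ℝ) < N := by exact_mod_cast (show (0 : ℤ) < N by linarith [abs_pos.mpr hk0])
  exact norm_pos_iff.mp (lt_of_lt_of_le (by positivity) (le_norm_fourierRoot_sub_one hk))

theorem geom_sum_fourierRoot_eq_zero {N : ℕ} {k : ℤ} (hk0 : k ≠ 0) (hk : 2 * |k| ≤ N) :
    ∑ t ∈ range N, fourierRoot N k ^ t = 0 := by
  have hN : N ≠ 0 := by
    rintro rfl
    have := abs_pos.mpr hk0
    simp only [CharP.cast_eq_zero] at hk
    linarith
  have h := geom_sum_mul (fourierRoot N k) N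
  rw [fourierRoot_pow_self hN, sub_self] at h
  exact (mul_eq_zero.mp h).resolve_right (fourierRoot_sub_one_ne_zero hk0 hk)

theorem starRingEnd_fourierFn (nb : ℕ) (k : ℤ) (t : ℕ) :
    (starRingEnd ℂ) (fourierFn nb k t) = (√(2 ^ nb) : ℂ)⁻¹ * fourierRoot (2 ^ nb) k ^ t := by
  rw [fourierFn, fourierRoot, map_mul, map_inv₀, Complex.conj_ofReal, ← Complex.exp_conj,
    ← Complex.exp_nat_mul]
  congr 2
  simp only [map_div₀, map_mul, Complex.conj_I, map_ofNat, Complex.conj_ofReal, map_intCast,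
    map_natCast, map_pow]
  push_cast
  ring

theorem sum_Ico_pow_eq_pow_mul_geom_sum {R : Type*} [CommSemiring R] (z : R) (a m : ℕ) :
    ∑ t ∈ Ico a (a + m), z ^ t = z ^ a * ∑ s ∈ range m, z ^ s := by
  rw [sum_Ico_eq_sum_range, add_tsub_cancel_left, mul_sum]
  simp only [pow_add]

theorem sum_pow_mul_haarWavelet (z : ℂ) {nb n l : ℕ} (hn : n < nb) (hl : l < 2 ^ n) :
    ∑ t ∈ range (2 ^ nb), z ^ t * (haarWavelet nb n l t : ℂ) =
      ((2 : ℝ) ^ (((n : ℝ) - nb) / 2) : ℝ) * z ^ (l * 2 ^ (nb - n)) *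
        (1 - z ^ 2 ^ (nb - n - 1)) * ∑ s ∈ range (2 ^ (nb - n - 1)), z ^ s := by
  set c : ℝ := (2 : ℝ) ^ (((n : ℝ) - nb) / 2)
  set m := 2 ^ (nb - n - 1)
  have h2m : 2 ^ (nb - n) = 2 * m := by rw [← pow_succ']; congr 1; omega
  set a := l * 2 ^ (nb - n) with ha
  have haN : a + 2 * m ≤ 2 ^ nb :=
    calc a + 2 * m = (l + 1) * 2 ^ (nb - n) := by rw [ha, h2m]; ring
      _ ≤ 2 ^ n * 2 ^ (nb - n) := Nat.mul_le_mul_right _ hl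
      _ = 2 ^ nb := by rw [← pow_add]; congr 1; omega
  have h1 : (2 * l + 1) * 2 ^ (nb - n) = 2 * a + 2 * m := by rw [ha, h2m]; ring
  have h2 : (l + 1) * 2 ^ (nb - n) = a + m + m := by rw [ha, h2m]; ring
  have hψ : ∀ t, haarWavelet nb n l t =
      if a ≤ t ∧ t < a + m then c else if a + m ≤ t ∧ t < a + m + m then -c else 0 := by
    intro t
    simp only [haarWavelet, h1, h2, ← ha]
    clear_value a m
    split_ifs <;> first | rfl | omega
  have hpiece : ∀ b e (v : ℝ), (∀ t, b ≤ t → t < e → haarWavelet nb n l t = v) →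
      ∑ t ∈ Ico b e, z ^ t * (haarWavelet nb n l t : ℂ) = v * ∑ t ∈ Ico b e, z ^ t := by
    intro b e v hv
    rw [mul_sum]
    refine sum_congr rfl fun t ht => ?_
    rw [mem_Ico] at ht
    rw [hv t ht.1 ht.2, mul_comm]
  rw [range_eq_Ico, ← sum_Ico_consecutive _ (Nat.zero_le a) (by omega : a ≤ 2 ^ nb),
    ← sum_Ico_consecutive _ (by omega : a ≤ a + m) (by omega : a + m ≤ 2 ^ nb),
    ← sum_Ico_consecutive _ (by omega : a + m ≤ a + m + m) (by omega : a + m + m ≤ 2 ^ nb),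
    hpiece 0 a 0 (fun t _ _ => by rw [hψ]; split_ifs <;> first | rfl | omega),
    hpiece a (a + m) c (fun t _ _ => by rw [hψ]; split_ifs <;> first | rfl | omega),
    hpiece (a + m) (a + m + m) (-c) (fun t _ _ => by rw [hψ]; split_ifs <;> first | rfl | omega),
    hpiece (a + m + m) (2 ^ nb) 0 (fun t _ _ => by rw [hψ]; split_ifs <;> first | rfl | omega),
    sum_Ico_pow_eq_pow_mul_geom_sum, sum_Ico_pow_eq_pow_mul_geom_sum, pow_add]
  push_cast
  ring

noncomputable def fourierHaarCoeff (nb : ℕ) (k : ℤ) (i : HaarIndex nb) : ℂ :=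
  ∑ t ∈ range (2 ^ nb), (starRingEnd ℂ) (fourierFn nb k t) * (haarFn nb i t : ℂ)

theorem fourierHaarCoeff_inl (nb : ℕ) (k : ℤ) :
    fourierHaarCoeff nb k (.inl ()) =
      (∑ t ∈ range (2 ^ nb), fourierRoot (2 ^ nb) k ^ t) / 2 ^ nb := by
  have hψ : (2 : ℝ) ^ (-(nb : ℝ) / 2) = (√(2 ^ nb))⁻¹ := by
    rw [neg_div, Real.rpow_neg zero_le_two, two_rpow_div_two]
  have hsq : ((√(2 ^ nb) : ℝ) : ℂ) ^ 2 = 2 ^ nb := by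
    rw [← Complex.ofReal_pow, Real.sq_sqrt (by positivity)]; push_cast; rfl
  simp only [fourierHaarCoeff, haarFn, haarScaling]
  rw [hψ, div_eq_inv_mul, mul_sum, ← hsq]
  refine sum_congr rfl fun t _ => ?_
  rw [starRingEnd_fourierFn]
  push_cast
  ring

theorem norm_fourierHaarCoeff_inr {nb : ℕ} (k : ℤ) (n : Fin nb) (l : Fin (2 ^ (n : ℕ))) :
    ‖fourierHaarCoeff nb k (.inr ⟨n, l⟩)‖ =
      ‖fourierRoot (2 ^ nb) k ^ 2 ^ (nb - n - 1) - 1‖ *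
        ‖∑ s ∈ range (2 ^ (nb - n - 1)), fourierRoot (2 ^ nb) k ^ s‖ /
          (2 * 2 ^ (nb - n - 1) * √(2 ^ (n : ℕ))) := by
  have hsum : fourierHaarCoeff nb k (.inr ⟨n, l⟩) = (√(2 ^ nb) : ℂ)⁻¹ *
      ∑ t ∈ range (2 ^ nb), fourierRoot (2 ^ nb) k ^ t * (haarWavelet nb n l t : ℂ) := by
    simp only [fourierHaarCoeff, haarFn, starRingEnd_fourierFn, mul_sum, mul_assoc]
  have hc : (√(2 ^ nb))⁻¹ * (2 : ℝ) ^ ((((n : ℕ) : ℝ) - nb) / 2) =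
      1 / (2 * 2 ^ (nb - n - 1) * √(2 ^ (n : ℕ))) := by
    have hN : √((2 : ℝ) ^ nb) ^ 2 = √(2 ^ (n : ℕ)) ^ 2 * (2 * 2 ^ (nb - n - 1)) := by
      rw [Real.sq_sqrt (by positivity), Real.sq_sqrt (by positivity),
        two_pow_eq_two_pow_mul_two_mul n.isLt]
    rw [sub_div, Real.rpow_sub two_pos, two_rpow_div_two, two_rpow_div_two]
    field_simp
    linear_combination -hN
  rw [hsum, sum_pow_mul_haarWavelet _ n.isLt l.isLt]
  simp only [norm_mul, norm_inv, norm_pow, norm_fourierRoot, one_pow, mul_one, Complex.norm_real,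
    Real.norm_eq_abs, abs_of_nonneg (Real.sqrt_nonneg _),
    abs_of_nonneg (Real.rpow_nonneg zero_le_two _)]
  rw [div_eq_mul_one_div _ (_ * _ : ℝ), ← hc, norm_sub_rev (1 : ℂ)]
  ring

theorem norm_fourierHaarCoeff_le_one (nb : ℕ) (k : ℤ) (i : HaarIndex nb) :
    ‖fourierHaarCoeff nb k i‖ ≤ 1 := by
  rcases i with ⟨⟩ | ⟨n, l⟩
  · rw [fourierHaarCoeff_inl, norm_div, div_le_one (by simp)]
    simpa using norm_geom_sum_le_of_norm_eq_one (norm_fourierRoot (2 ^ nb) k) (2 ^ nb)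
  · have hs : 1 ≤ √((2 : ℝ) ^ (n : ℕ)) := Real.one_le_sqrt.mpr (one_le_pow₀ one_le_two)
    rw [norm_fourierHaarCoeff_inr, div_le_one (by positivity)]
    calc _ ≤ 2 * ((2 ^ (nb - n - 1) : ℕ) : ℝ) :=
          mul_le_mul (norm_pow_sub_one_le_two_of_norm_eq_one (norm_fourierRoot _ _) _)
            (norm_geom_sum_le_of_norm_eq_one (norm_fourierRoot _ _) _) (norm_nonneg _) zero_le_two
      _ ≤ 2 * 2 ^ (nb - n - 1) * √(2 ^ (n : ℕ)) := by
        push_cast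
        exact le_mul_of_one_le_right (by positivity) hs

theorem norm_fourierHaarCoeff_inr_le_sqrt_div {nb : ℕ} {k : ℤ} (hk0 : k ≠ 0)
    (hk : 2 * |k| ≤ 2 ^ nb) (n : Fin nb) (l : Fin (2 ^ (n : ℕ))) :
    ‖fourierHaarCoeff nb k (.inr ⟨n, l⟩)‖ ≤ √(2 ^ (n : ℕ)) / |(k : ℝ)| := by
  set ω := fourierRoot (2 ^ nb) k
  set m := 2 ^ (nb - n - 1)
  have hkN : 2 * |k| ≤ ((2 ^ nb : ℕ) : ℤ) := by exact_mod_cast hk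
  have hkpos : (0 : ℝ) < |(k : ℝ)| := by positivity
  have hD : 4 * |(k : ℝ)| / 2 ^ nb ≤ ‖ω - 1‖ := by
    simpa using le_norm_fourierRoot_sub_one hkN
  have hDpos : 0 < ‖ω - 1‖ := norm_pos_iff.mpr (fourierRoot_sub_one_ne_zero hk0 hkN)
  have hA : ‖ω ^ m - 1‖ ≤ 2 := norm_pow_sub_one_le_two_of_norm_eq_one (norm_fourierRoot _ _) _
  have hAG : ‖ω ^ m - 1‖ * ‖∑ s ∈ range m, ω ^ s‖ = ‖ω ^ m - 1‖ ^ 2 / ‖ω - 1‖ := by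
    rw [← geom_sum_mul, norm_mul]
    field_simp
  have hs := Real.sq_sqrt (pow_nonneg zero_le_two (n : ℕ))
  have hN := two_pow_eq_two_pow_mul_two_mul n.isLt
  rw [norm_fourierHaarCoeff_inr, hAG, div_div, div_le_div_iff₀ (by positivity) hkpos]
  calc ‖ω ^ m - 1‖ ^ 2 * |(k : ℝ)| ≤ 2 ^ 2 * |(k : ℝ)| := by gcongr
    _ ≤ ‖ω - 1‖ * 2 ^ nb := by rw [div_le_iff₀ (by positivity)] at hD; linarith
    _ = √(2 ^ (n : ℕ)) * (‖ω - 1‖ * (2 * 2 ^ (nb - n - 1) * √(2 ^ (n : ℕ)))) := by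
      rw [hN]; linear_combination (-(2 * 2 ^ (nb - n - 1) * ‖ω - 1‖)) * hs

theorem norm_fourierHaarCoeff_inr_le_pi_mul {nb : ℕ} (k : ℤ) (n : Fin nb)
    (l : Fin (2 ^ (n : ℕ))) :
    ‖fourierHaarCoeff nb k (.inr ⟨n, l⟩)‖ ≤
      π * |(k : ℝ)| / (2 * 2 ^ (n : ℕ) * √(2 ^ (n : ℕ))) := by
  have hA := norm_fourierRoot_pow_sub_one_le (2 ^ nb) k (2 ^ (nb - n - 1))
  have hG := norm_geom_sum_le_of_norm_eq_one (norm_fourierRoot (2 ^ nb) k) (2 ^ (nb - n - 1))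
  have hN := two_pow_eq_two_pow_mul_two_mul n.isLt
  push_cast at hA hG
  rw [norm_fourierHaarCoeff_inr, div_le_div_iff₀ (by positivity) (by positivity)]
  calc _ ≤ 2 ^ (nb - n - 1) * (2 * π * |(k : ℝ)| / 2 ^ nb) * 2 ^ (nb - n - 1) *
        (2 * 2 ^ (n : ℕ) * √(2 ^ (n : ℕ))) := by gcongr
    _ = π * |(k : ℝ)| * (2 * 2 ^ (nb - n - 1) * √(2 ^ (n : ℕ))) := by
      rw [hN]; field_simp

theorem norm_fourierHaarCoeff_le_sqrt_two_div {nb : ℕ} {k : ℤ} (hk0 : k ≠ 0)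
    (hk : 2 * |k| ≤ 2 ^ nb) (i : HaarIndex nb) :
    ‖fourierHaarCoeff nb k i‖ ≤ √2 / √|(k : ℝ)| := by
  have hkpos : (0 : ℝ) < |(k : ℝ)| := by positivity
  rcases i with ⟨⟩ | ⟨n, l⟩
  · have hkN : 2 * |k| ≤ ((2 ^ nb : ℕ) : ℤ) := by exact_mod_cast hk
    rw [fourierHaarCoeff_inl, geom_sum_fourierRoot_eq_zero hk0 hkN, zero_div, norm_zero]
    positivity
  set K := √|(k : ℝ)|
  set s := √((2 : ℝ) ^ (n : ℕ))
  have hK : K ^ 2 = |(k : ℝ)| := Real.sq_sqrt hkpos.le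
  have hs : s ^ 2 = 2 ^ (n : ℕ) := Real.sq_sqrt (by positivity)
  have hKpos : 0 < K := Real.sqrt_pos.mpr hkpos
  have hsqrt2K : √2 * K = √(2 * |(k : ℝ)|) := (Real.sqrt_mul zero_le_two _).symm
  rcases le_or_gt ((2 : ℝ) ^ (n : ℕ)) (2 * |(k : ℝ)|) with hcoarse | hfine
  · have hsK : s ≤ √2 * K := hsqrt2K ▸ Real.sqrt_le_sqrt hcoarse
    calc _ ≤ s / |(k : ℝ)| := norm_fourierHaarCoeff_inr_le_sqrt_div hk0 hk n l
      _ ≤ √2 * K / K ^ 2 := by rw [hK]; gcongr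
      _ = √2 / K := by field_simp
  · have hKs : √2 * K ≤ s := hsqrt2K ▸ Real.sqrt_le_sqrt hfine.le
    have h2 : √2 ^ 2 = 2 := Real.sq_sqrt zero_le_two
    have h8 : 8 * K ^ 3 ≤ 2 * √2 * s ^ 3 :=
      calc 8 * K ^ 3 = 2 * √2 * (√2 * K) ^ 3 := by
            linear_combination (-2 * K ^ 3 * (√2 ^ 2 + 2)) * h2
        _ ≤ 2 * √2 * s ^ 3 := by gcongr
    calc _ ≤ π * |(k : ℝ)| / (2 * 2 ^ (n : ℕ) * s) := norm_fourierHaarCoeff_inr_le_pi_mul k n l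
      _ ≤ √2 / K := by
        rw [← hK, ← hs, div_le_div_iff₀ (by positivity) hKpos]
        nlinarith [pi_le_four, pow_pos hKpos 3]

theorem fourier_haar_local_coherence_bound_general (nb : ℕ) (hnb : 1 ≤ nb)
    (l : ℕ) (hlN : l ≤ 2 ^ nb) :
    Finset.univ.sup' ⟨Sum.inl (), Finset.mem_univ _⟩
        (fun i : HaarIndex nb =>
          ‖∑ t ∈ Finset.range (2 ^ nb),
            (starRingEnd ℂ) (fourierFn nb ((l : ℤ) - 2 ^ (nb - 1)) t) *
              (haarFn nb i t : ℂ)‖) ≤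
      Real.sqrt 2 *
        (if l = 2 ^ (nb - 1) then 1
          else min 1 (Real.sqrt |(l : ℝ) - 2 ^ (nb - 1)|)⁻¹) := by
  set k : ℤ := (l : ℤ) - 2 ^ (nb - 1) with hk_def
  have hk : 2 * |k| ≤ 2 ^ nb := by
    have hN : (2 : ℤ) ^ nb = 2 * 2 ^ (nb - 1) := by rw [← pow_succ']; congr 1; omega
    have hlN' : (l : ℤ) ≤ 2 ^ nb := by exact_mod_cast hlN
    rw [hN, mul_le_mul_iff_right₀ two_pos, abs_le]
    constructor <;> linarith [Int.natCast_nonneg l]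
  refine sup'_le _ _ fun i _ => ?_
  change ‖fourierHaarCoeff nb k i‖ ≤ _
  have hle_sqrt_two := (norm_fourierHaarCoeff_le_one nb k i).trans one_lt_sqrt_two.le
  split_ifs with hl
  · rwa [mul_one]
  · have hk0 : k ≠ 0 := fun h => hl (by exact_mod_cast (by linarith : (l : ℤ) = 2 ^ (nb - 1)))
    have hkR : |(l : ℝ) - 2 ^ (nb - 1)| = |(k : ℝ)| := by rw [hk_def]; push_cast; rfl
    rw [hkR, mul_min_of_nonneg _ _ (sqrt_nonneg 2), mul_one, ← div_eq_mul_inv]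
    exact le_min hle_sqrt_two (norm_fourierHaarCoeff_le_sqrt_two_div hk0 hk i)

/-- local coherence of the discrete Fourier basis with the 1D Haar
wavelet basis: `μ_l^{loc}(F*Ψ₁D) ≤ √2 · min{1, |l - N/2|^{-1/2}}`, the frequency
being indexed so that `l = N/2` corresponds to zero frequency (for `l = N/2` the
bound `√2 · min{1, ∞} = √2` applies). -/
theorem fourier_haar_local_coherence_bound (nb : ℕ) (hnb : 1 ≤ nb)
    (l : ℕ) (hl1 : 1 ≤ l) (hlN : l ≤ 2 ^ nb) :
    Finset.univ.sup' ⟨Sum.inl (), Finset.mem_univ _⟩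
        (fun i : HaarIndex nb =>
          ‖∑ t ∈ Finset.range (2 ^ nb),
            (starRingEnd ℂ) (fourierFn nb ((l : ℤ) - 2 ^ (nb - 1)) t) *
              (haarFn nb i t : ℂ)‖) ≤
      Real.sqrt 2 *
        (if l = 2 ^ (nb - 1) then 1
          else min 1 (Real.sqrt |(l : ℝ) - 2 ^ (nb - 1)|)⁻¹) :=
  fourier_haar_local_coherence_bound_general nb hnb l hlN
end

section
/- (Noise energy bound under variable density sampling) Let M < N be integers, β a random variable on {1,...,N} with pmf η, and suppose ρ ≥ 1 satisfies (1/N) sup_{q≥1} (1/q)(E η(β)^{-q})^{1/q} ≤ ρ. Let Ω = {Ω₁,...,Ω_M} with Ω_j i.i.d. copies of β, and let D ∈ ℝ^{M×M} be diagonal with D_{jj} = 1/√(η(Ω_j)). Then for any fixed vector n ∈ ℂ^M and any s > 0, with probability at least 1 - e^{-s/2}, (1/M)‖D n‖² ≤ (N/M)‖n‖² + 4e · max{s/M, √(s/M)} · ρ ‖n‖_∞² N. -/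
/-!
Chernoff's method. The hypothesis on `ρ` says `E η(β)^{-q} ≤ (ρNq)^q`, so `X_j = |n_j|²/η(Ω_j)` has
moments `E X_j^q ≤ (λq)^q` with `λ = ρ‖n‖_∞²N`. Expanding the exponential and using `q^q/q! ≤ e^q`
gives `E e^{θX_j} ≤ exp(θ E X_j + 2(eλθ)²)` whenever `eλθ ≤ 1/2`. Independence factorizes the
moment generating function of `Σ_j X_j`, and `eλθ = min(t, 1/2)` yields the Bernstein bound
`exp(-(M/2) min(t², t))` for the event `Σ_j (X_j - E X_j) ≥ 4eλMt`; with `E X_j = N|n_j|²` and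
`t = max(s/M, √(s/M))` this is the claim.
-/

open Finset Real

lemma le_pow_of_inv_mul_rpow_inv_le {S L : ℝ} (hS : 0 ≤ S) {q : ℕ} (hq : q ≠ 0)
    (h : (q : ℝ)⁻¹ * S ^ (q : ℝ)⁻¹ ≤ L) : S ≤ (L * q) ^ q := by
  have hq' : (0 : ℝ) < q := by positivity
  calc S = (S ^ (q : ℝ)⁻¹) ^ q := (rpow_inv_natCast_pow hS hq).symm
    _ ≤ (L * q) ^ q := by
      gcongr
      rw [mul_comm]
      exact (inv_mul_le_iff₀ hq').1 h

section Moments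

variable {α : Type*} [Fintype α] {η : α → ℝ} {N ρ : ℝ}

lemma sum_mul_inv_pow_le (hη : ∀ a, 0 < η a) (hN : 0 < N)
    (hρ : ∀ q : ℝ, 1 ≤ q → N⁻¹ * (q⁻¹ * (∑ a, η a * η a ^ (-q)) ^ q⁻¹) ≤ ρ)
    {q : ℕ} (hq : 1 ≤ q) :
    ∑ a, η a * (η a)⁻¹ ^ q ≤ (ρ * N * q) ^ q := by
  have hsum : ∑ a, η a * η a ^ (-(q : ℝ)) = ∑ a, η a * (η a)⁻¹ ^ q := by
    refine sum_congr rfl fun a _ => ?_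
    rw [rpow_neg (hη a).le, rpow_natCast, inv_pow]
  refine le_pow_of_inv_mul_rpow_inv_le
    (sum_nonneg fun a _ => by have := hη a; positivity) (by omega) ?_
  have := hρ q (by exact_mod_cast hq)
  rw [hsum, inv_mul_le_iff₀ hN] at this
  linarith

lemma sum_mul_div_pow_le (hη : ∀ a, 0 < η a) (hN : 0 < N)
    (hρ : ∀ q : ℝ, 1 ≤ q → N⁻¹ * (q⁻¹ * (∑ a, η a * η a ^ (-q)) ^ q⁻¹) ≤ ρ)
    {c K : ℝ} (hc : 0 ≤ c) (hcK : c ≤ K) {q : ℕ} (hq : 1 ≤ q) :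
    ∑ a, η a * (c / η a) ^ q ≤ (ρ * K * N * q) ^ q :=
  calc ∑ a, η a * (c / η a) ^ q = c ^ q * ∑ a, η a * (η a)⁻¹ ^ q := by
        rw [mul_sum]
        exact sum_congr rfl fun a _ => by ring
    _ ≤ K ^ q * (ρ * N * q) ^ q :=
        mul_le_mul (pow_le_pow_left₀ hc hcK q) (sum_mul_inv_pow_le hη hN hρ hq)
          (sum_nonneg fun a _ => by have := hη a; positivity) (pow_nonneg (hc.trans hcK) q)
    _ = (ρ * K * N * q) ^ q := by ring

end Moments

theorem sum_mul_exp_le_of_moment_le {α : Type*} [Fintype α] {w X : α → ℝ}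
    (hw : ∑ a, w a = 1) {L θ : ℝ} (hL : 0 ≤ L) (hθ : 0 ≤ θ)
    (hθL : θ * (exp 1 * L) ≤ 1 / 2)
    (hmom : ∀ q : ℕ, 2 ≤ q → ∑ a, w a * X a ^ q ≤ (L * q) ^ q) :
    ∑ a, w a * exp (θ * X a) ≤ exp (θ * ∑ a, w a * X a + 2 * (θ * (exp 1 * L)) ^ 2) := by
  set u := θ * (exp 1 * L)
  set F : ℕ → ℝ := fun q => ∑ a, w a * ((θ * X a) ^ q / q.factorial)
  have hF : HasSum F (∑ a, w a * exp (θ * X a)) := hasSum_sum fun a _ => by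
    simpa [exp_eq_exp_ℝ] using (NormedSpace.expSeries_div_hasSum_exp (θ * X a)).mul_left (w a)
  have hF0 : F 0 = 1 := by simp [F, hw]
  have hF1 : F 1 = θ * ∑ a, w a * X a := by
    simp only [F, pow_one, Nat.factorial_one, Nat.cast_one, div_one, mul_sum]
    exact sum_congr rfl fun a _ => by ring
  have hFtail (q : ℕ) : F (q + 2) ≤ u ^ 2 * (1 / 2) ^ q := by
    set m := q + 2
    have hu : 0 ≤ u := by positivity
    calc F m = θ ^ m / m.factorial * ∑ a, w a * X a ^ m := by
          simp only [F, mul_sum]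
          exact sum_congr rfl fun a _ => by ring
      _ ≤ θ ^ m / m.factorial * (L * m) ^ m := by gcongr; exact hmom m (by omega)
      _ = (θ * L) ^ m * ((m : ℝ) ^ m / m.factorial) := by ring
      _ ≤ (θ * L) ^ m * exp 1 ^ m := by
          rw [exp_one_pow]
          gcongr
          exact pow_div_factorial_le_exp _ m.cast_nonneg m
      _ = u ^ 2 * u ^ q := by ring
      _ ≤ u ^ 2 * (1 / 2) ^ q := by gcongr
  have htail := hasSum_le hFtail ((hasSum_nat_add_iff' 2).2 hF)
    (hasSum_geometric_two.mul_left (u ^ 2))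
  simp only [sum_range_succ, sum_range_zero, hF0, hF1] at htail
  linarith [add_one_le_exp (θ * ∑ a, w a * X a + 2 * u ^ 2)]

theorem sum_prod_le_exp_neg_mul_prod_sum_exp {ι α : Type*} [Fintype ι] [Fintype α]
    {w : α → ℝ} (hw : ∀ a, 0 ≤ w a) (f : ι → α → ℝ) {θ A : ℝ} (hθ : 0 ≤ θ)
    {E : Finset (ι → α)} (hE : ∀ ω ∈ E, A ≤ ∑ i, f i (ω i)) :
    ∑ ω ∈ E, ∏ i, w (ω i) ≤ exp (-(θ * A)) * ∏ i, ∑ a, w a * exp (θ * f i a) := by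
  classical
  have hprod (ω : ι → α) : 0 ≤ ∏ i, w (ω i) := prod_nonneg fun i _ => hw _
  calc ∑ ω ∈ E, ∏ i, w (ω i)
      ≤ ∑ ω ∈ E, (∏ i, w (ω i)) * exp (θ * (∑ i, f i (ω i) - A)) := by
        refine sum_le_sum fun ω hω => le_mul_of_one_le_right (hprod ω) (one_le_exp ?_)
        exact mul_nonneg hθ (sub_nonneg.2 (hE ω hω))
    _ ≤ ∑ (ω : ι → α), (∏ i, w (ω i)) * exp (θ * (∑ i, f i (ω i) - A)) :=
        sum_le_sum_of_subset_of_nonneg (subset_univ E) fun ω _ _ =>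
          mul_nonneg (hprod ω) (exp_pos _).le
    _ = exp (-(θ * A)) * ∑ (ω : ι → α), ∏ i, w (ω i) * exp (θ * f i (ω i)) := by
        rw [mul_sum]
        refine sum_congr rfl fun ω _ => ?_
        rw [prod_mul_distrib, ← exp_sum, mul_sub, mul_sum, sub_eq_neg_add, exp_add]
        ring
    _ = exp (-(θ * A)) * ∏ i, ∑ a, w a * exp (θ * f i a) := by
        rw [prod_univ_sum, Fintype.piFinset_univ]

lemma min_sq_self_le_four_mul (t : ℝ) :
    min (t ^ 2) t ≤ 4 * min t (1 / 2) * (2 * t - min t (1 / 2)) := by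
  rcases min_cases t (1 / 2) with ⟨h, hle⟩ | ⟨h, hlt⟩ <;> rw [h]
  · nlinarith [min_le_left (t ^ 2) t]
  · nlinarith [min_le_right (t ^ 2) t]

lemma le_mul_min_sq_max {s m : ℝ} (hm : 0 < m) :
    s ≤ m * min (max (s / m) (√s / √m) ^ 2) (max (s / m) (√s / √m)) := by
  set t := max (s / m) (√s / √m)
  rw [mul_min_of_nonneg _ _ hm.le]
  refine le_min ?_ ((div_le_iff₀' hm).1 (le_max_left _ _))
  rcases le_or_gt s 0 with hs | hs
  · exact hs.trans (by positivity)
  · have : s / m ≤ t ^ 2 := by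
      rw [← sq_sqrt hs.le, ← sq_sqrt hm.le, ← div_pow]
      exact pow_le_pow_left₀ (by positivity) (le_max_right _ _) 2
    exact (div_le_iff₀' hm).1 this

theorem sum_prod_le_exp_of_moment_le {ι α : Type*} [Fintype ι] [Fintype α] {w : α → ℝ}
    (hw0 : ∀ a, 0 ≤ w a) (hw : ∑ a, w a = 1) {X : ι → α → ℝ} {L : ℝ} (hL : 0 < L)
    (hmom : ∀ i, ∀ q : ℕ, 2 ≤ q → ∑ a, w a * X i a ^ q ≤ (L * q) ^ q)
    {t : ℝ} (ht : 0 ≤ t) {E : Finset (ι → α)}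
    (hE : ∀ ω ∈ E, ∑ i, ∑ a, w a * X i a + 4 * exp 1 * L * Fintype.card ι * t ≤
      ∑ i, X i (ω i)) :
    ∑ ω ∈ E, ∏ i, w (ω i) ≤ exp (-(Fintype.card ι / 2 * min (t ^ 2) t)) := by
  set u := min t (1 / 2)
  set θ := u / (exp 1 * L)
  have hθu : θ * (exp 1 * L) = u := div_mul_cancel₀ _ (by positivity)
  have hθ : 0 ≤ θ := by positivity
  have hmgf (i : ι) := sum_mul_exp_le_of_moment_le hw hL.le hθ (hθu ▸ min_le_right _ _) (hmom i)
  rw [hθu] at hmgf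
  calc ∑ ω ∈ E, ∏ i, w (ω i)
      ≤ exp (-(θ * _)) * ∏ i, ∑ a, w a * exp (θ * X i a) :=
        sum_prod_le_exp_neg_mul_prod_sum_exp hw0 X hθ hE
    _ ≤ exp (-(θ * _)) * ∏ i, exp (θ * ∑ a, w a * X i a + 2 * u ^ 2) := by
        gcongr with i
        · exact fun i _ => sum_nonneg fun a _ => mul_nonneg (hw0 a) (exp_pos _).le
        · exact hmgf i
    _ ≤ exp (-(Fintype.card ι / 2 * min (t ^ 2) t)) := by
        rw [← exp_sum, ← exp_add, exp_le_exp, sum_add_distrib, sum_const, card_univ,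
          nsmul_eq_mul, ← mul_sum]
        have := min_sq_self_le_four_mul t
        have hcard : (0 : ℝ) ≤ Fintype.card ι := by positivity
        have : θ * (4 * exp 1 * L * Fintype.card ι * t) = 4 * Fintype.card ι * t * u := by
          rw [← hθu]; ring
        nlinarith

theorem vds_noise_energy_bound_general (N M : ℕ) (hM : 0 < M)
    (η : Fin N → ℝ) (hpos : ∀ l, 0 < η l) (hsum : ∑ l, η l = 1)
    (ρ : ℝ) (hρ1 : 1 ≤ ρ)
    (hρ : ∀ q : ℝ, 1 ≤ q →
      ((N : ℝ))⁻¹ * (q⁻¹ * (∑ l, η l * (η l) ^ (-q)) ^ q⁻¹) ≤ ρ)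
    (n : Fin M → ℂ) (s : ℝ) :
    ∑ ω ∈ Finset.univ.filter (fun ω : Fin M → Fin N =>
        ((N : ℝ) / M) * (∑ j, ‖n j‖ ^ 2) +
            4 * Real.exp 1 * max (s / M) (Real.sqrt s / Real.sqrt M) * ρ *
              (Finset.univ.sup' ⟨⟨0, hM⟩, Finset.mem_univ _⟩
                  (fun j => ‖n j‖)) ^ 2 * N <
          (1 / (M : ℝ)) * ∑ j, ‖n j‖ ^ 2 / η (ω j)),
      ∏ j, η (ω j) ≤ Real.exp (-s / 2) := by
  set K := univ.sup' ⟨⟨0, hM⟩, mem_univ _⟩ fun j => ‖n j‖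
  set t := max (s / M) (√s / √M)
  have hnK (j : Fin M) : ‖n j‖ ≤ K := le_sup' (fun j => ‖n j‖) (mem_univ j)
  have hN : (0 : ℝ) < N := Nat.cast_pos.2 (Nat.pos_of_ne_zero (by rintro rfl; simp at hsum))
  have hM' : (0 : ℝ) < M := Nat.cast_pos.2 hM
  rcases ((norm_nonneg _).trans (hnK ⟨0, hM⟩)).eq_or_lt with hK | hK
  · have hn (j : Fin M) : ‖n j‖ = 0 := le_antisymm (hK ▸ hnK j) (norm_nonneg _)
    simpa [hn, ← hK] using (exp_pos _).le
  have hmean (j : Fin M) : ∑ l, η l * (‖n j‖ ^ 2 / η l) = N * ‖n j‖ ^ 2 := by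
    simp [mul_div_cancel₀ _ (hpos _).ne']
  refine (sum_prod_le_exp_of_moment_le (fun l => (hpos l).le) hsum (L := ρ * K ^ 2 * N)
    (X := fun j l => ‖n j‖ ^ 2 / η l) (by positivity)
    (fun j q hq => sum_mul_div_pow_le hpos hN hρ (by positivity)
      (pow_le_pow_left₀ (norm_nonneg _) (hnK j) 2) (by omega)) (t := t) (by positivity) ?_).trans ?_
  · intro ω hω
    replace hω := (mem_filter.1 hω).2
    rw [one_div, lt_inv_mul_iff₀ hM', mul_add, ← mul_assoc, mul_div_cancel₀ _ hM'.ne'] at hω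
    simp only [hmean, ← mul_sum, Fintype.card_fin]
    linarith
  · rw [exp_le_exp, Fintype.card_fin]
    linarith [le_mul_min_sq_max (s := s) hM']

/-- noise energy bound under variable density sampling.
The sample space of the `M` i.i.d. indices `Ω₁,…,Ω_M` drawn from the pmf `η` is
`Fin M → Fin N` with product weights `∏_j η(ω j)`; the probability that
`(1/M)‖Dn‖² = (1/M) Σ_j |n_j|²/η(Ω_j)` exceeds
`(N/M)‖n‖² + 4e·max{s/M, √s/√M}·ρ‖n‖_∞² N` is at most `e^{-s/2}`. -/
theorem vds_noise_energy_bound (N M : ℕ) (hM : 0 < M) (hMN : M < N)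
    (η : Fin N → ℝ) (hpos : ∀ l, 0 < η l) (hsum : ∑ l, η l = 1)
    (ρ : ℝ) (hρ1 : 1 ≤ ρ)
    (hρ : ∀ q : ℝ, 1 ≤ q →
      ((N : ℝ))⁻¹ * (q⁻¹ * (∑ l, η l * (η l) ^ (-q)) ^ q⁻¹) ≤ ρ)
    (n : Fin M → ℂ) (s : ℝ) (hs : 0 < s) :
    ∑ ω ∈ Finset.univ.filter (fun ω : Fin M → Fin N =>
        ((N : ℝ) / M) * (∑ j, ‖n j‖ ^ 2) +
            4 * Real.exp 1 * max (s / M) (Real.sqrt s / Real.sqrt M) * ρ *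
              (Finset.univ.sup' ⟨⟨0, hM⟩, Finset.mem_univ _⟩
                  (fun j => ‖n j‖)) ^ 2 * N <
          (1 / (M : ℝ)) * ∑ j, ‖n j‖ ^ 2 / η (ω j)),
      ∏ j, η (ω j) ≤ Real.exp (-s / 2) :=
  vds_noise_energy_bound_general N M hM η hpos hsum ρ hρ1 hρ n s
end

section
/- Let N = 2^n̄ and let k be a nonzero integer with |k| ≤ N/2. Then 2^{n/2} · sin²(π k 2^{-n-1}) / |k| ≤ √(2/|k|) for every integer 0 ≤ n ≤ n̄ - 1. -/
/-- for `N = 2^n̄`, a nonzero integer `k` with `|k| ≤ N/2`, and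
`0 ≤ n ≤ n̄ - 1`, one has `2^{n/2} sin²(πk 2^{-n-1})/|k| ≤ √(2/|k|)`. -/
theorem sine_power_bound (nb : ℕ) (hnb : 1 ≤ nb) (k : ℤ) (hk : k ≠ 0)
    (hkN : |k| ≤ 2 ^ (nb - 1)) (n : ℕ) (hn : n ≤ nb - 1) :
    (2 : ℝ) ^ ((n : ℝ) / 2) *
        Real.sin (Real.pi * (k : ℝ) * (2 : ℝ) ^ (-(n : ℝ) - 1)) ^ 2 / |(k : ℝ)| ≤
      Real.sqrt (2 / |(k : ℝ)|) := by
  have hK1 : (1:ℝ) ≤ |(k:ℝ)| := by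
    rw [← Int.cast_abs]
    exact_mod_cast Int.one_le_abs hk
  have hKpos : (0:ℝ) < |(k:ℝ)| := lt_of_lt_of_le one_pos hK1
  set K := |(k:ℝ)| with hKdef
  set P : ℝ := (2:ℝ) ^ n with hPdef
  have hP0 : (0:ℝ) < P := by positivity
  have hsq : (2:ℝ)^((n:ℝ)/2) = Real.sqrt P := by
    rw [show ((n:ℝ)/2) = (n:ℝ)*(1/2) by ring, Real.rpow_mul (by norm_num),
      Real.rpow_natCast, Real.sqrt_eq_rpow]
  have he : (2:ℝ)^(-(n:ℝ)-1) = ((2:ℝ)^(n+1))⁻¹ := by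
    rw [show (-(n:ℝ)-1) = -(((n+1 : ℕ)):ℝ) by push_cast; ring,
      Real.rpow_neg (by norm_num), Real.rpow_natCast]
  rw [hsq, he]
  set s := Real.sin (Real.pi * (k:ℝ) * ((2:ℝ)^(n+1))⁻¹) with hsdef
  have hs0 : (0:ℝ) ≤ s^2 := sq_nonneg s
  rw [Real.le_sqrt (by positivity) (by positivity)]
  rw [div_pow, mul_pow, Real.sq_sqrt hP0.le, div_le_div_iff₀ (by positivity) hKpos]
  rcases le_or_gt P (2*K) with hcase | hcase
  · have hs1 : s^2 ≤ 1 := Real.sin_sq_le_one _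
    have h4 : (s^2)^2 ≤ 1 := pow_le_one₀ hs0 hs1
    nlinarith [mul_nonneg (mul_nonneg hP0.le hKpos.le) (sub_nonneg.2 h4),
      mul_nonneg hKpos.le (sub_nonneg.2 hcase)]
  · set y := Real.pi * (k:ℝ) * ((2:ℝ)^(n+1))⁻¹ with hydef
    have hs2 : s^2 ≤ y^2 := Real.sin_sq_le_sq
    have hy' : 4 * P^2 * y^2 = Real.pi^2 * K^2 := by
      have hk2 : K^2 = (k:ℝ)^2 := sq_abs _
      rw [hydef, hk2, hPdef, pow_succ]
      field_simp
      ring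
    have hpi2 : Real.pi^2 ≤ 16 := by nlinarith [Real.pi_le_four, Real.pi_pos]
    have hpi4 : Real.pi^4 ≤ 256 := by
      nlinarith [mul_nonneg (sub_nonneg.2 hpi2) (by positivity : (0:ℝ) ≤ 16 + Real.pi^2)]
    have hP3 : 8*K^3 < P^3 := by
      nlinarith [mul_pos (sub_pos.2 hcase) (by positivity : (0:ℝ) < P^2+2*P*K+4*K^2)]
    have h16 : 16*P^4*(y^2)^2 = Real.pi^4*K^4 := by
      linear_combination (4*P^2*y^2 + Real.pi^2*K^2) * hy'
    have hs4 : (s^2)^2 ≤ (y^2)^2 := pow_le_pow_left₀ hs0 hs2 2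
    have h1 : 16*P^4*(s^2)^2 ≤ 256*K^4 := by
      calc 16*P^4*(s^2)^2 ≤ 16*P^4*(y^2)^2 :=
            mul_le_mul_of_nonneg_left hs4 (by positivity)
        _ = Real.pi^4*K^4 := h16
        _ ≤ 256*K^4 := mul_le_mul_of_nonneg_right hpi4 (by positivity)
    have hfin : 16*P^3*(P*(s^2)^2*K) ≤ 16*P^3*(2*K^2) := by
      calc 16*P^3*(P*(s^2)^2*K) = (16*P^4*(s^2)^2)*K := by ring
        _ ≤ 256*K^4*K := mul_le_mul_of_nonneg_right h1 hKpos.le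
        _ = 32*K^2*(8*K^3) := by ring
        _ ≤ 32*K^2*P^3 := mul_le_mul_of_nonneg_left hP3.le (by positivity)
        _ = 16*P^3*(2*K^2) := by ring
    exact le_of_mul_le_mul_left hfin (by positivity)
end
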